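/- Let F be a field, V an F-vector space, and Γ₄ = V × T²V × T³V × T⁴V the group whose multiplication has coordinates v₁ + v₁'; v₂ + v₂' + [v₁, v₁']; v₃ + v₃' + 3[v₁, v₂'] + 3[v₂, v₁'] + [v₁, v₁', v₁' − v₁]; and v₄ + v₄' + [v₁, v₃'] + 3[v₂, v₂'] + [v₃, v₁'] + [v₂, v₁', v₁' − v₁] + [v₁, v₂', v₁' − v₁] + [v₁, v₁', v₂' − v₂] − [v₁, v₁', v₁, v₁']. Then for all g, g', g'', g''' in Γ₄ with first coordinates v₁, v₁', v₁'', v₁''' respectively, the left-normed group commutator satisfies [g, g', g'', g'''] = (0, 0, 0, 24 [v₁, v₁', v₁'', v₁''']), where on the right the bracket is the left-normed tensor-algebra bracket. -/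

import Mathlib

/-!
Each commutator pushes the bracket one level deeper. For arbitrary `g, g'` the commutator
`[g, g']` has first coordinate `0` and second coordinate `2 [v₁, v₁']`; if moreover `v₁ = 0`,
its third coordinate is `6 [v₂, v₁']`; if `v₁ = v₂ = 0`, its fourth coordinate is
`2 [v₃, v₁']`. Iterating three times gives `2 · 6 · 2 = 24`.
-/
open TensorProduct

section LieTuples

variable (F : Type*) {V : Type*} [Field F] [AddCommGroup V] [Module F V]

/-- `[u, w] = u ⊗ w − w ⊗ u ∈ T²V` for `u, w ∈ V`. -/
noncomputable def br11 (u w : V) : V ⊗[F] V :=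
  u ⊗ₜ[F] w - w ⊗ₜ[F] u

/-- `[x, y] = x ⊗ y − y ⊗ x ∈ T³V` for `x ∈ T²V`, `y ∈ V`, where the tensor
`y ⊗ x ∈ V ⊗ T²V` is rewritten in `T³V = (V ⊗ V) ⊗ V` via the associator. -/
noncomputable def br21 (x : V ⊗[F] V) (y : V) : (V ⊗[F] V) ⊗[F] V :=
  x ⊗ₜ[F] y - (TensorProduct.assoc F V V V).symm (y ⊗ₜ[F] x)

/-- `[y, x] = y ⊗ x − x ⊗ y ∈ T³V` for `y ∈ V`, `x ∈ T²V`. -/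
noncomputable def br12 (y : V) (x : V ⊗[F] V) : (V ⊗[F] V) ⊗[F] V :=
  (TensorProduct.assoc F V V V).symm (y ⊗ₜ[F] x) - x ⊗ₜ[F] y

/-- The canonical isomorphism `V ⊗ T³V ≃ T⁴V` built from associators. -/
noncomputable def e13 : (V ⊗[F] ((V ⊗[F] V) ⊗[F] V)) ≃ₗ[F] ((V ⊗[F] V) ⊗[F] V) ⊗[F] V :=
  (TensorProduct.assoc F V (V ⊗[F] V) V).symm ≪≫ₗ
    TensorProduct.congr (TensorProduct.assoc F V V V).symm (LinearEquiv.refl F V)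

/-- The canonical isomorphism `T²V ⊗ T²V ≃ T⁴V` built from the associator. -/
noncomputable def e22 : ((V ⊗[F] V) ⊗[F] (V ⊗[F] V)) ≃ₗ[F] ((V ⊗[F] V) ⊗[F] V) ⊗[F] V :=
  (TensorProduct.assoc F (V ⊗[F] V) V V).symm

/-- `[y, z] ∈ T⁴V` for `y ∈ V`, `z ∈ T³V`. -/
noncomputable def br13 (y : V) (z : (V ⊗[F] V) ⊗[F] V) : ((V ⊗[F] V) ⊗[F] V) ⊗[F] V :=
  e13 F (y ⊗ₜ[F] z) - z ⊗ₜ[F] y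

/-- `[z, y] ∈ T⁴V` for `z ∈ T³V`, `y ∈ V`. -/
noncomputable def br31 (z : (V ⊗[F] V) ⊗[F] V) (y : V) : ((V ⊗[F] V) ⊗[F] V) ⊗[F] V :=
  z ⊗ₜ[F] y - e13 F (y ⊗ₜ[F] z)

/-- `[x, x'] ∈ T⁴V` for `x, x' ∈ T²V`. -/
noncomputable def br22 (x x' : V ⊗[F] V) : ((V ⊗[F] V) ⊗[F] V) ⊗[F] V :=
  e22 F (x ⊗ₜ[F] x') - e22 F (x' ⊗ₜ[F] x)

/-- The multiplication of Lie 3-tuples, on `Γ₃ = V × T²V × T³V`. -/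
noncomputable def gamma3Mul (a b : V × (V ⊗[F] V) × ((V ⊗[F] V) ⊗[F] V)) :
    V × (V ⊗[F] V) × ((V ⊗[F] V) ⊗[F] V) :=
  (a.1 + b.1,
   a.2.1 + b.2.1 + br11 F a.1 b.1,
   a.2.2 + b.2.2 + 3 • br12 F a.1 b.2.1 + 3 • br21 F a.2.1 b.1
     + br21 F (br11 F a.1 b.1) (b.1 - a.1))

/-- The multiplication of Lie 4-tuples, on `Γ₄ = V × T²V × T³V × T⁴V`. -/
noncomputable def gamma4Mul
    (a b : V × (V ⊗[F] V) × ((V ⊗[F] V) ⊗[F] V) × (((V ⊗[F] V) ⊗[F] V) ⊗[F] V)) :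
    V × (V ⊗[F] V) × ((V ⊗[F] V) ⊗[F] V) × (((V ⊗[F] V) ⊗[F] V) ⊗[F] V) :=
  (a.1 + b.1,
   a.2.1 + b.2.1 + br11 F a.1 b.1,
   a.2.2.1 + b.2.2.1 + 3 • br12 F a.1 b.2.1 + 3 • br21 F a.2.1 b.1
     + br21 F (br11 F a.1 b.1) (b.1 - a.1),
   a.2.2.2 + b.2.2.2 + br13 F a.1 b.2.2.1 + 3 • br22 F a.2.1 b.2.1
     + br31 F a.2.2.1 b.1
     + br31 F (br21 F a.2.1 b.1) (b.1 - a.1)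
     + br31 F (br12 F a.1 b.2.1) (b.1 - a.1)
     + br22 F (br11 F a.1 b.1) (b.2.1 - a.2.1)
     - br31 F (br21 F (br11 F a.1 b.1) a.1) b.1)

end LieTuples


/-- The inverse `(−v₁, −v₂, −v₃, −v₄)` in `Γ₄`. -/
noncomputable def gamma4Inv (F : Type*) {V : Type*} [Field F] [AddCommGroup V]
    [Module F V] (a : V × (V ⊗[F] V) × ((V ⊗[F] V) ⊗[F] V) × (((V ⊗[F] V) ⊗[F] V) ⊗[F] V)) : V × (V ⊗[F] V) × ((V ⊗[F] V) ⊗[F] V) × (((V ⊗[F] V) ⊗[F] V) ⊗[F] V) :=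
  (-a.1, -a.2.1, -a.2.2.1, -a.2.2.2)

/-- The group commutator `[g, g'] = g⁻¹ g'⁻¹ g g'` in `Γ₄`. -/
noncomputable def gamma4Comm (F : Type*) {V : Type*} [Field F] [AddCommGroup V]
    [Module F V] (g g' : V × (V ⊗[F] V) × ((V ⊗[F] V) ⊗[F] V) × (((V ⊗[F] V) ⊗[F] V) ⊗[F] V)) : V × (V ⊗[F] V) × ((V ⊗[F] V) ⊗[F] V) × (((V ⊗[F] V) ⊗[F] V) ⊗[F] V) :=
  gamma4Mul F (gamma4Mul F (gamma4Mul F (gamma4Inv F g) (gamma4Inv F g')) g) g'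


section Commutators

variable (F : Type*) {V : Type*} [Field F] [AddCommGroup V] [Module F V]

lemma br11_zero_left (w : V) : br11 F 0 w = 0 := by
  simp [br11]

lemma br21_zero_left (y : V) : br21 F (0 : V ⊗[F] V) y = 0 := by
  simp [br21]

lemma br21_add_left (x x' : V ⊗[F] V) (y : V) :
    br21 F (x + x') y = br21 F x y + br21 F x' y := by
  simp only [br21, add_tmul, tmul_add, map_add]
  abel

lemma br31_add_left (z z' : (V ⊗[F] V) ⊗[F] V) (y : V) :
    br31 F (z + z') y = br31 F z y + br31 F z' y := by
  simp only [br31, add_tmul, tmul_add, map_add]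
  abel

lemma br21_nsmul_left (n : ℕ) (x : V ⊗[F] V) (y : V) :
    br21 F (n • x) y = n • br21 F x y :=
  map_nsmul (AddMonoidHom.mk' (br21 F · y) fun x x' => br21_add_left F x x' y) n x

lemma br31_nsmul_left (n : ℕ) (z : (V ⊗[F] V) ⊗[F] V) (y : V) :
    br31 F (n • z) y = n • br31 F z y :=
  map_nsmul (AddMonoidHom.mk' (br31 F · y) fun z z' => br31_add_left F z z' y) n z

variable (g g' : V × (V ⊗[F] V) × ((V ⊗[F] V) ⊗[F] V) × (((V ⊗[F] V) ⊗[F] V) ⊗[F] V))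

lemma gamma4Comm_fst : (gamma4Comm F g g').1 = 0 := by
  simp only [gamma4Comm, gamma4Mul, gamma4Inv]
  abel

lemma gamma4Comm_snd_fst : (gamma4Comm F g g').2.1 = 2 • br11 F g.1 g'.1 := by
  simp only [gamma4Comm, gamma4Mul, gamma4Inv, br11, add_tmul, tmul_add, neg_tmul, tmul_neg]
  abel

lemma gamma4Comm_snd_snd_fst (hg : g.1 = 0) :
    (gamma4Comm F g g').2.2.1 = 6 • br21 F g.2.1 g'.1 := by
  obtain ⟨v₁, v₂, v₃, v₄⟩ := g
  obtain rfl : v₁ = 0 := hg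
  simp only [gamma4Comm, gamma4Mul, gamma4Inv, br11, br21, br12, add_tmul, tmul_add, sub_tmul,
    tmul_sub, neg_tmul, tmul_neg, zero_tmul, tmul_zero, map_add, map_sub, map_neg, map_zero,
    TensorProduct.assoc_symm_tmul, neg_zero, zero_add, add_zero, sub_zero, zero_sub]
  abel

lemma gamma4Comm_snd_snd_snd (hg₁ : g.1 = 0) (hg₂ : g.2.1 = 0) :
    (gamma4Comm F g g').2.2.2 = 2 • br31 F g.2.2.1 g'.1 := by
  obtain ⟨v₁, v₂, v₃, v₄⟩ := g
  obtain rfl : v₁ = 0 := hg₁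
  obtain rfl : v₂ = 0 := hg₂
  simp only [gamma4Comm, gamma4Mul, gamma4Inv, br11, br21, br12, br13, br31, br22, e13, e22,
    add_tmul, tmul_add, sub_tmul, tmul_sub, neg_tmul, tmul_neg, zero_tmul, tmul_zero,
    map_add, map_sub, map_neg, map_zero, LinearEquiv.trans_apply, TensorProduct.assoc_symm_tmul,
    TensorProduct.congr_tmul, LinearEquiv.refl_apply, neg_zero, zero_add, add_zero, sub_zero,
    zero_sub, sub_self, nsmul_zero]
  abel

end Commutators

theorem gamma4_commutator (F V : Type*) [Field F] [AddCommGroup V] [Module F V]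
    (g₁ g₂ g₃ g₄ : V × (V ⊗[F] V) × ((V ⊗[F] V) ⊗[F] V) × (((V ⊗[F] V) ⊗[F] V) ⊗[F] V)) :
    gamma4Comm F (gamma4Comm F (gamma4Comm F g₁ g₂) g₃) g₄ =
      ((0, 0, 0, 24 • br31 F (br21 F (br11 F g₁.1 g₂.1) g₃.1) g₄.1) : V × (V ⊗[F] V) × ((V ⊗[F] V) ⊗[F] V) × (((V ⊗[F] V) ⊗[F] V) ⊗[F] V)) := by
  set c₂ := gamma4Comm F g₁ g₂
  set c₃ := gamma4Comm F c₂ g₃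
  have hc₂ : c₂.1 = 0 := gamma4Comm_fst F g₁ g₂
  have hc₃ : c₃.1 = 0 := gamma4Comm_fst F c₂ g₃
  have hc₃' : c₃.2.1 = 0 := by
    rw [gamma4Comm_snd_fst, hc₂, br11_zero_left, nsmul_zero]
  refine Prod.ext (gamma4Comm_fst F c₃ g₄) (Prod.ext ?_ (Prod.ext ?_ ?_))
  · rw [gamma4Comm_snd_fst, hc₃, br11_zero_left, nsmul_zero]
  · rw [gamma4Comm_snd_snd_fst F c₃ g₄ hc₃, hc₃', br21_zero_left, nsmul_zero]
  · rw [gamma4Comm_snd_snd_snd F c₃ g₄ hc₃ hc₃', gamma4Comm_snd_snd_fst F c₂ g₃ hc₂,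
      gamma4Comm_snd_fst, br21_nsmul_left, br31_nsmul_left, br31_nsmul_left, smul_smul, smul_smul]
    rfl
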